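/- arXiv:0911.3197 — 3 statements merged into one kernel-verified Lean document; each statement's English description precedes it below -/
import Mathlib

section
/- Let k₁, k₂, k₃ ∈ ℤ, j₁, j₂, j₃ ∈ ℤ≥0, and let f_i ∈ L²(ℝ²) (i=1,2,3) be nonnegative functions with f_i supported in [2^{k_i-1}, 2^{k_i+1}] × I_{j_i} (in the second variable, I_j = {μ : |μ| ∈ [2^{j-1}, 2^{j+1}]} for j ≥ 1 and I_0 = {|μ| ≤ 2}). Then for any measurable function Ω : ℝ² → ℝ, the trilinear form J(f₁,f₂,f₃) = ∫_{ℝ⁴} f₁(ξ₁,μ₁) f₂(ξ₂,μ₂) f₃(ξ₁+ξ₂, μ₁+μ₂+Ω(ξ₁,ξ₂)) dξ₁ dξ₂ dμ₁ dμ₂ satisfies J(f₁,f₂,f₃) ≤ C · 2^{j_min/2} · 2^{k_min/2} · ‖f₁‖_{L²} ‖f₂‖_{L²} ‖f₃‖_{L²}, where j_min = min(j₁,j₂,j₃), k_min = min(k₁,k₂,k₃), and C is an absolute constant. -/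
open MeasureTheory ENNReal

/-- The dyadic modulation region `I_j`: `{μ : |μ| ∈ [2^{j-1}, 2^{j+1}]}` for `j ≥ 1`
and `{|μ| ≤ 2}` for `j = 0`. -/
def Idyad (j : ℕ) : Set ℝ :=
  if j = 0 then {μ : ℝ | |μ| ≤ 2}
  else {μ : ℝ | |μ| ∈ Set.Icc ((2:ℝ)^(j-1)) ((2:ℝ)^(j+1))}

section TriHelpers

local notation "vol" => (volume : Measure ℝ)

lemma Idyad_meas (j : ℕ) : MeasurableSet (Idyad j) := by
  unfold Idyad
  split_ifs
  · exact measurable_abs measurableSet_Iic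
  · exact measurable_abs measurableSet_Icc

lemma Idyad_vol (j : ℕ) : volume (Idyad j) ≤ ENNReal.ofReal (2 * 2^(j+1)) := by
  have hsub : Idyad j ⊆ Set.Icc (-((2:ℝ)^(j+1))) ((2:ℝ)^(j+1)) := by
    intro x hx
    unfold Idyad at hx
    split_ifs at hx with hj
    · subst hj
      have : |x| ≤ (2:ℝ)^(0+1) := by simpa using hx
      exact abs_le.mp this
    · exact abs_le.mp hx.2
  calc volume (Idyad j) ≤ volume (Set.Icc (-((2:ℝ)^(j+1))) ((2:ℝ)^(j+1))) :=
        measure_mono hsub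
    _ = ENNReal.ofReal (2 * 2^(j+1)) := by
        rw [Real.volume_Icc]; congr 1; ring

lemma kset_meas (k : ℤ) :
    MeasurableSet {x : ℝ | |x| ∈ Set.Icc ((2:ℝ)^(k-1)) ((2:ℝ)^(k+1))} :=
  measurable_abs measurableSet_Icc

lemma kset_vol (k : ℤ) :
    volume {x : ℝ | |x| ∈ Set.Icc ((2:ℝ)^(k-1)) ((2:ℝ)^(k+1))} ≤
      ENNReal.ofReal (2 * 2^(k+1)) := by
  have hsub : {x : ℝ | |x| ∈ Set.Icc ((2:ℝ)^(k-1)) ((2:ℝ)^(k+1))} ⊆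
      Set.Icc (-((2:ℝ)^(k+1))) ((2:ℝ)^(k+1)) := fun x hx => abs_le.mp hx.2
  calc _ ≤ volume (Set.Icc (-((2:ℝ)^(k+1))) ((2:ℝ)^(k+1))) := measure_mono hsub
    _ = ENNReal.ofReal (2 * 2^(k+1)) := by rw [Real.volume_Icc]; congr 1; ring

lemma tri_pow_nat (j : ℕ) :
    ((2:ℝ) * 2^(j+1)) ^ (1/2:ℝ) = 2 * (2:ℝ) ^ ((j:ℝ)/2) := by
  have h1 : (2:ℝ) * 2^(j+1) = (2:ℝ)^(j+2) := by ring
  rw [h1, ← Real.rpow_natCast 2 (j+2), ← Real.rpow_mul (by norm_num)]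
  have h2 : ((j:ℝ)+2) * (1/2) = (j:ℝ)/2 + 1 := by ring
  push_cast
  rw [h2, Real.rpow_add (by norm_num), Real.rpow_one]
  ring

lemma tri_pow_int (k : ℤ) :
    ((2:ℝ) * 2^(k+1)) ^ (1/2:ℝ) = 2 * (2:ℝ) ^ ((k:ℝ)/2) := by
  have h1 : (2:ℝ) * 2^(k+1) = (2:ℝ)^(k+2) := by
    rw [show k+2 = (k+1)+1 by ring, zpow_add_one₀ (two_ne_zero : (2:ℝ) ≠ 0) (k+1)]
    ring
  rw [h1, ← Real.rpow_intCast 2 (k+2), ← Real.rpow_mul (by norm_num)]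
  have h2 : (((k+2:ℤ)):ℝ) * (1/2) = (k:ℝ)/2 + 1 := by push_cast; ring
  rw [h2, Real.rpow_add (by norm_num), Real.rpow_one]
  ring

lemma tri_conj : Real.HolderConjugate 2 2 := Real.HolderConjugate.two_two

lemma tri_cs (h g : ℝ → ℝ≥0∞) (mh : Measurable h) (mg : Measurable g) :
    ∫⁻ x, h x * g x ≤
      (∫⁻ x, h x ^ (2:ℝ)) ^ (1/2:ℝ) * (∫⁻ x, g x ^ (2:ℝ)) ^ (1/2:ℝ) := by
  simpa using ENNReal.lintegral_mul_le_Lp_mul_Lq vol tri_conj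
    mh.aemeasurable mg.aemeasurable

lemma tri_l1 (h : ℝ → ℝ≥0∞) (mh : Measurable h) {s : Set ℝ} (ms : MeasurableSet s)
    (hs : ∀ x ∉ s, h x = 0) :
    ∫⁻ x, h x ≤ (vol s) ^ (1/2:ℝ) * (∫⁻ x, h x ^ (2:ℝ)) ^ (1/2:ℝ) := by
  have key : ∀ x, h x = s.indicator (fun _ => (1:ℝ≥0∞)) x * h x := by
    intro x
    by_cases hx : x ∈ s
    · simp [Set.indicator_of_mem hx]
    · simp [Set.indicator_of_notMem hx, hs x hx]
  have key2 : ∀ x, s.indicator (fun _ => (1:ℝ≥0∞)) x ^ (2:ℝ)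
      = s.indicator (fun _ => (1:ℝ≥0∞)) x := by
    intro x
    by_cases hx : x ∈ s
    · simp [Set.indicator_of_mem hx]
    · simp [Set.indicator_of_notMem hx]
  calc ∫⁻ x, h x = ∫⁻ x, s.indicator (fun _ => (1:ℝ≥0∞)) x * h x := by
        simp_rw [← key]
    _ ≤ (∫⁻ x, s.indicator (fun _ => (1:ℝ≥0∞)) x ^ (2:ℝ)) ^ (1/2:ℝ) *
          (∫⁻ x, h x ^ (2:ℝ)) ^ (1/2:ℝ) :=
        tri_cs _ h (measurable_const.indicator ms) mh
    _ = (vol s) ^ (1/2:ℝ) * (∫⁻ x, h x ^ (2:ℝ)) ^ (1/2:ℝ) := by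
        simp_rw [key2, lintegral_indicator_const ms, one_mul]

section Cases
variable (h₁ h₂ h₃ : ℝ → ℝ≥0∞) (m₁ : Measurable h₁) (m₂ : Measurable h₂)
  (m₃ : Measurable h₃) (c : ℝ)

include m₁ m₂ m₃

lemma tri_caseA :
    ∫⁻ x, ∫⁻ y, h₁ x * (h₂ y * h₃ (x + y + c)) ≤
      (∫⁻ x, h₁ x) * ((∫⁻ x, h₂ x ^ (2:ℝ)) ^ (1/2:ℝ) * (∫⁻ x, h₃ x ^ (2:ℝ)) ^ (1/2:ℝ)) := by
  have step : ∀ x : ℝ, ∫⁻ y, h₁ x * (h₂ y * h₃ (x + y + c)) ≤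
      h₁ x * ((∫⁻ u, h₂ u ^ (2:ℝ)) ^ (1/2:ℝ) * (∫⁻ u, h₃ u ^ (2:ℝ)) ^ (1/2:ℝ)) := by
    intro x
    rw [lintegral_const_mul _ (by fun_prop : Measurable fun y => h₂ y * h₃ (x + y + c))]
    refine mul_le_mul_right ?_ _
    calc ∫⁻ y, h₂ y * h₃ (x + y + c)
        ≤ (∫⁻ u, h₂ u ^ (2:ℝ)) ^ (1/2:ℝ) * (∫⁻ y, h₃ (x + y + c) ^ (2:ℝ)) ^ (1/2:ℝ) :=
          tri_cs _ _ m₂ (by fun_prop : Measurable fun y => h₃ (x + y + c))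
      _ = _ := by
          congr 2
          have : ∀ y : ℝ, x + y + c = y + (x + c) := fun y => by ring
          simp_rw [this]
          exact lintegral_add_right_eq_self (fun u => h₃ u ^ (2:ℝ)) (x + c)
  calc ∫⁻ x, ∫⁻ y, h₁ x * (h₂ y * h₃ (x + y + c))
      ≤ ∫⁻ x, h₁ x * ((∫⁻ u, h₂ u ^ (2:ℝ)) ^ (1/2:ℝ) * (∫⁻ u, h₃ u ^ (2:ℝ)) ^ (1/2:ℝ)) :=
        lintegral_mono step
    _ = _ := lintegral_mul_const _ m₁

lemma tri_caseB :
    ∫⁻ x, ∫⁻ y, h₁ x * (h₂ y * h₃ (x + y + c)) ≤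
      (∫⁻ x, h₁ x ^ (2:ℝ)) ^ (1/2:ℝ) * ((∫⁻ x, h₂ x) * (∫⁻ x, h₃ x ^ (2:ℝ)) ^ (1/2:ℝ)) := by
  have swap : ∫⁻ x, ∫⁻ y, h₁ x * (h₂ y * h₃ (x + y + c)) =
      ∫⁻ y, ∫⁻ x, h₁ x * (h₂ y * h₃ (x + y + c)) := by
    apply lintegral_lintegral_swap
    apply Measurable.aemeasurable
    fun_prop
  rw [swap]
  have step : ∀ y : ℝ, ∫⁻ x, h₁ x * (h₂ y * h₃ (x + y + c)) ≤
      h₂ y * ((∫⁻ u, h₁ u ^ (2:ℝ)) ^ (1/2:ℝ) * (∫⁻ u, h₃ u ^ (2:ℝ)) ^ (1/2:ℝ)) := by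
    intro y
    have re : ∀ x : ℝ, h₁ x * (h₂ y * h₃ (x + y + c)) =
        h₂ y * (h₁ x * h₃ (x + y + c)) := fun x => by ring
    simp_rw [re]
    rw [lintegral_const_mul _ (by fun_prop : Measurable fun x => h₁ x * h₃ (x + y + c))]
    refine mul_le_mul_right ?_ _
    calc ∫⁻ x, h₁ x * h₃ (x + y + c)
        ≤ (∫⁻ u, h₁ u ^ (2:ℝ)) ^ (1/2:ℝ) * (∫⁻ x, h₃ (x + y + c) ^ (2:ℝ)) ^ (1/2:ℝ) :=
          tri_cs _ _ m₁ (by fun_prop : Measurable fun x => h₃ (x + y + c))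
      _ = _ := by
          congr 2
          have : ∀ x : ℝ, x + y + c = x + (y + c) := fun x => by ring
          simp_rw [this]
          exact lintegral_add_right_eq_self (fun u => h₃ u ^ (2:ℝ)) (y + c)
  calc ∫⁻ y, ∫⁻ x, h₁ x * (h₂ y * h₃ (x + y + c))
      ≤ ∫⁻ y, h₂ y * ((∫⁻ u, h₁ u ^ (2:ℝ)) ^ (1/2:ℝ) * (∫⁻ u, h₃ u ^ (2:ℝ)) ^ (1/2:ℝ)) :=
        lintegral_mono step
    _ = (∫⁻ y, h₂ y) * ((∫⁻ u, h₁ u ^ (2:ℝ)) ^ (1/2:ℝ) * (∫⁻ u, h₃ u ^ (2:ℝ)) ^ (1/2:ℝ)) :=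
        lintegral_mul_const _ m₂
    _ = _ := by ring

lemma tri_caseC :
    ∫⁻ x, ∫⁻ y, h₁ x * (h₂ y * h₃ (x + y + c)) ≤
      (∫⁻ x, h₁ x ^ (2:ℝ)) ^ (1/2:ℝ) * ((∫⁻ x, h₂ x ^ (2:ℝ)) ^ (1/2:ℝ) * (∫⁻ x, h₃ x)) := by
  have sub : ∀ x : ℝ, ∫⁻ y, h₁ x * (h₂ y * h₃ (x + y + c)) =
      ∫⁻ z, h₁ x * (h₂ (z - (x + c)) * h₃ z) := by
    intro x
    have := lintegral_add_right_eq_self (μ := vol)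
      (fun z => h₁ x * (h₂ (z - (x + c)) * h₃ z)) (x + c)
    rw [← this]
    congr 1
    funext y
    have e1 : y + (x + c) - (x + c) = y := by ring
    have e2 : y + (x + c) = x + y + c := by ring
    rw [e1, e2]
  simp_rw [sub]
  have swap : ∫⁻ x, ∫⁻ z, h₁ x * (h₂ (z - (x + c)) * h₃ z) =
      ∫⁻ z, ∫⁻ x, h₁ x * (h₂ (z - (x + c)) * h₃ z) := by
    apply lintegral_lintegral_swap
    apply Measurable.aemeasurable
    fun_prop
  rw [swap]
  have step : ∀ z : ℝ, ∫⁻ x, h₁ x * (h₂ (z - (x + c)) * h₃ z) ≤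
      h₃ z * ((∫⁻ u, h₁ u ^ (2:ℝ)) ^ (1/2:ℝ) * (∫⁻ u, h₂ u ^ (2:ℝ)) ^ (1/2:ℝ)) := by
    intro z
    have re : ∀ x : ℝ, h₁ x * (h₂ (z - (x + c)) * h₃ z) =
        h₃ z * (h₁ x * h₂ (z - c - x)) := fun x => by
      have : z - (x + c) = z - c - x := by ring
      rw [this]; ring
    simp_rw [re]
    rw [lintegral_const_mul _ (by fun_prop : Measurable fun x => h₁ x * h₂ (z - c - x))]
    refine mul_le_mul_right ?_ _
    calc ∫⁻ x, h₁ x * h₂ (z - c - x)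
        ≤ (∫⁻ u, h₁ u ^ (2:ℝ)) ^ (1/2:ℝ) * (∫⁻ x, h₂ (z - c - x) ^ (2:ℝ)) ^ (1/2:ℝ) :=
          tri_cs _ _ m₁ (by fun_prop : Measurable fun x => h₂ (z - c - x))
      _ = _ := by
          congr 2
          exact (Measure.measurePreserving_sub_left vol (z - c)).lintegral_comp
            (m₂.pow_const (2:ℝ))
  calc ∫⁻ z, ∫⁻ x, h₁ x * (h₂ (z - (x + c)) * h₃ z)
      ≤ ∫⁻ z, h₃ z * ((∫⁻ u, h₁ u ^ (2:ℝ)) ^ (1/2:ℝ) * (∫⁻ u, h₂ u ^ (2:ℝ)) ^ (1/2:ℝ)) :=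
        lintegral_mono step
    _ = (∫⁻ z, h₃ z) * ((∫⁻ u, h₁ u ^ (2:ℝ)) ^ (1/2:ℝ) * (∫⁻ u, h₂ u ^ (2:ℝ)) ^ (1/2:ℝ)) :=
        lintegral_mul_const _ m₃
    _ = _ := by ring

lemma tri_core {s₁ s₂ s₃ : Set ℝ} (ms₁ : MeasurableSet s₁) (ms₂ : MeasurableSet s₂)
    (ms₃ : MeasurableSet s₃) (hs₁ : ∀ x ∉ s₁, h₁ x = 0) (hs₂ : ∀ x ∉ s₂, h₂ x = 0)
    (hs₃ : ∀ x ∉ s₃, h₃ x = 0) :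
    ∫⁻ x, ∫⁻ y, h₁ x * (h₂ y * h₃ (x + y + c)) ≤
      (min (vol s₁) (min (vol s₂) (vol s₃))) ^ (1/2:ℝ) *
        ((∫⁻ x, h₁ x ^ (2:ℝ)) ^ (1/2:ℝ) * ((∫⁻ x, h₂ x ^ (2:ℝ)) ^ (1/2:ℝ) *
          (∫⁻ x, h₃ x ^ (2:ℝ)) ^ (1/2:ℝ))) := by
  rcases le_total (vol s₁) (min (vol s₂) (vol s₃)) with h | h
  · rw [min_eq_left h]
    calc ∫⁻ x, ∫⁻ y, h₁ x * (h₂ y * h₃ (x + y + c))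
        ≤ (∫⁻ x, h₁ x) * ((∫⁻ x, h₂ x ^ (2:ℝ)) ^ (1/2:ℝ) * (∫⁻ x, h₃ x ^ (2:ℝ)) ^ (1/2:ℝ)) :=
          tri_caseA h₁ h₂ h₃ m₁ m₂ m₃ c
      _ ≤ ((vol s₁) ^ (1/2:ℝ) * (∫⁻ x, h₁ x ^ (2:ℝ)) ^ (1/2:ℝ)) *
            ((∫⁻ x, h₂ x ^ (2:ℝ)) ^ (1/2:ℝ) * (∫⁻ x, h₃ x ^ (2:ℝ)) ^ (1/2:ℝ)) :=
          mul_le_mul_left (tri_l1 h₁ m₁ ms₁ hs₁) _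
      _ = _ := by ring
  · rw [min_eq_right h]
    rcases le_total (vol s₂) (vol s₃) with h2 | h2
    · rw [min_eq_left h2]
      calc ∫⁻ x, ∫⁻ y, h₁ x * (h₂ y * h₃ (x + y + c))
          ≤ (∫⁻ x, h₁ x ^ (2:ℝ)) ^ (1/2:ℝ) *
              ((∫⁻ x, h₂ x) * (∫⁻ x, h₃ x ^ (2:ℝ)) ^ (1/2:ℝ)) :=
            tri_caseB h₁ h₂ h₃ m₁ m₂ m₃ c
        _ ≤ (∫⁻ x, h₁ x ^ (2:ℝ)) ^ (1/2:ℝ) *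
              (((vol s₂) ^ (1/2:ℝ) * (∫⁻ x, h₂ x ^ (2:ℝ)) ^ (1/2:ℝ)) *
                (∫⁻ x, h₃ x ^ (2:ℝ)) ^ (1/2:ℝ)) :=
            mul_le_mul_right (mul_le_mul_left (tri_l1 h₂ m₂ ms₂ hs₂) _) _
        _ = _ := by ring
    · rw [min_eq_right h2]
      calc ∫⁻ x, ∫⁻ y, h₁ x * (h₂ y * h₃ (x + y + c))
          ≤ (∫⁻ x, h₁ x ^ (2:ℝ)) ^ (1/2:ℝ) *
              ((∫⁻ x, h₂ x ^ (2:ℝ)) ^ (1/2:ℝ) * (∫⁻ x, h₃ x)) :=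
            tri_caseC h₁ h₂ h₃ m₁ m₂ m₃ c
        _ ≤ (∫⁻ x, h₁ x ^ (2:ℝ)) ^ (1/2:ℝ) *
              ((∫⁻ x, h₂ x ^ (2:ℝ)) ^ (1/2:ℝ) *
                ((vol s₃) ^ (1/2:ℝ) * (∫⁻ x, h₃ x ^ (2:ℝ)) ^ (1/2:ℝ))) :=
            mul_le_mul_right (mul_le_mul_right (tri_l1 h₃ m₃ ms₃ hs₃) _) _
        _ = _ := by ring

end Cases

/-- A measurable majorant of `‖f ·‖₊` supported in `S`, a.e. equal to it. -/
lemma tri_repr (f : ℝ × ℝ → ℝ) (hf : AEStronglyMeasurable f volume)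
    {S : Set (ℝ × ℝ)} (mS : MeasurableSet S) (hsupp : Function.support f ⊆ S) :
    ∃ ψ : ℝ × ℝ → ℝ≥0∞, Measurable ψ ∧ (∀ p, (‖f p‖₊ : ℝ≥0∞) ≤ ψ p) ∧
      (ψ =ᵐ[volume] fun p => (‖f p‖₊ : ℝ≥0∞)) ∧ (∀ p ∉ S, ψ p = 0) := by
  set φ : ℝ × ℝ → ℝ≥0∞ := fun p => (‖f p‖₊ : ℝ≥0∞) with hφdef
  have hφ : AEMeasurable φ volume := hf.enorm
  set g := hφ.mk φ with hgdef
  have hg : Measurable g := hφ.measurable_mk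
  have heq : φ =ᵐ[volume] g := hφ.ae_eq_mk
  have hbad : volume {p | φ p ≠ g p} = 0 := by
    exact ae_iff.mp heq
  set N := toMeasurable volume {p | φ p ≠ g p} with hNdef
  have hNm : MeasurableSet N := measurableSet_toMeasurable _ _
  have hN0 : volume N = 0 := by rw [hNdef, measure_toMeasurable]; exact hbad
  refine ⟨S.indicator (fun p => g p + N.indicator (fun _ => ⊤) p),
    (hg.add (measurable_const.indicator hNm)).indicator mS, ?_, ?_, ?_⟩
  · intro p
    by_cases hpS : p ∈ S
    · rw [Set.indicator_of_mem hpS]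
      by_cases hpN : p ∈ N
      · simp [Set.indicator_of_mem hpN]
      · have : φ p = g p := by
          by_contra hne
          exact hpN (subset_toMeasurable _ _ hne)
        rw [Set.indicator_of_notMem hpN, add_zero, ← this]
    · have : f p = 0 := by
        by_contra hne
        exact hpS (hsupp hne)
      rw [Set.indicator_of_notMem hpS]
      simp [this]
  · have hNae : ∀ᵐ p ∂(volume : Measure (ℝ × ℝ)), p ∉ N :=
      measure_eq_zero_iff_ae_notMem.mp hN0
    filter_upwards [hNae] with p hp
    by_cases hpS : p ∈ S
    · rw [Set.indicator_of_mem hpS, Set.indicator_of_notMem hp, add_zero]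
      have : φ p = g p := by
        by_contra hne
        exact hp (subset_toMeasurable _ _ hne)
      exact this.symm
    · have : f p = 0 := by
        by_contra hne
        exact hpS (hsupp hne)
      rw [Set.indicator_of_notMem hpS]
      simp [hφdef, this]
  · intro p hp
    exact Set.indicator_of_notMem hp _

end TriHelpers

theorem trilinear_dyadic_estimate :
    ∃ C > 0, ∀ (k₁ k₂ k₃ : ℤ) (j₁ j₂ j₃ : ℕ) (f₁ f₂ f₃ : ℝ × ℝ → ℝ)
      (Ω : ℝ → ℝ → ℝ), Measurable (fun p : ℝ × ℝ => Ω p.1 p.2) →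
      (∀ p, 0 ≤ f₁ p) → (∀ p, 0 ≤ f₂ p) → (∀ p, 0 ≤ f₃ p) →
      MemLp f₁ 2 volume → MemLp f₂ 2 volume → MemLp f₃ 2 volume →
      Function.support f₁ ⊆ {p : ℝ × ℝ |
        |p.1| ∈ Set.Icc ((2:ℝ)^(k₁-1)) ((2:ℝ)^(k₁+1)) ∧ p.2 ∈ Idyad j₁} →
      Function.support f₂ ⊆ {p : ℝ × ℝ |
        |p.1| ∈ Set.Icc ((2:ℝ)^(k₂-1)) ((2:ℝ)^(k₂+1)) ∧ p.2 ∈ Idyad j₂} →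
      Function.support f₃ ⊆ {p : ℝ × ℝ |
        |p.1| ∈ Set.Icc ((2:ℝ)^(k₃-1)) ((2:ℝ)^(k₃+1)) ∧ p.2 ∈ Idyad j₃} →
      (∫ ξ₁ : ℝ, ∫ ξ₂ : ℝ, ∫ μ₁ : ℝ, ∫ μ₂ : ℝ,
          f₁ (ξ₁, μ₁) * f₂ (ξ₂, μ₂) * f₃ (ξ₁ + ξ₂, μ₁ + μ₂ + Ω ξ₁ ξ₂)) ≤
        C * (2:ℝ) ^ (((min j₁ (min j₂ j₃) : ℕ) : ℝ) / 2)
          * (2:ℝ) ^ (((min k₁ (min k₂ k₃) : ℤ) : ℝ) / 2)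
          * (eLpNorm f₁ 2 volume).toReal * (eLpNorm f₂ 2 volume).toReal *
            (eLpNorm f₃ 2 volume).toReal := by
  refine ⟨4, by norm_num, ?_⟩
  intro k₁ k₂ k₃ j₁ j₂ j₃ f₁ f₂ f₃ Ω hΩ hf₁pos hf₂pos hf₃pos hM₁ hM₂ hM₃ hsupp₁ hsupp₂ hsupp₃
  -- measurable majorants
  have mS₁ : MeasurableSet {p : ℝ × ℝ |
      |p.1| ∈ Set.Icc ((2:ℝ)^(k₁-1)) ((2:ℝ)^(k₁+1)) ∧ p.2 ∈ Idyad j₁} :=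
    ((kset_meas k₁).preimage measurable_fst).inter ((Idyad_meas j₁).preimage measurable_snd)
  have mS₂ : MeasurableSet {p : ℝ × ℝ |
      |p.1| ∈ Set.Icc ((2:ℝ)^(k₂-1)) ((2:ℝ)^(k₂+1)) ∧ p.2 ∈ Idyad j₂} :=
    ((kset_meas k₂).preimage measurable_fst).inter ((Idyad_meas j₂).preimage measurable_snd)
  have mS₃ : MeasurableSet {p : ℝ × ℝ |
      |p.1| ∈ Set.Icc ((2:ℝ)^(k₃-1)) ((2:ℝ)^(k₃+1)) ∧ p.2 ∈ Idyad j₃} :=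
    ((kset_meas k₃).preimage measurable_fst).inter ((Idyad_meas j₃).preimage measurable_snd)
  obtain ⟨ψ₁, mψ₁, hle₁, hae₁, hz₁⟩ := tri_repr f₁ hM₁.1 mS₁ hsupp₁
  obtain ⟨ψ₂, mψ₂, hle₂, hae₂, hz₂⟩ := tri_repr f₂ hM₂.1 mS₂ hsupp₂
  obtain ⟨ψ₃, mψ₃, hle₃, hae₃, hz₃⟩ := tri_repr f₃ hM₃.1 mS₃ hsupp₃
  -- the frequency-profile functions
  set g₁ : ℝ → ℝ≥0∞ := fun ξ => (∫⁻ x, ψ₁ (ξ, x) ^ (2:ℝ)) ^ (1/2:ℝ) with hg₁def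
  set g₂ : ℝ → ℝ≥0∞ := fun ξ => (∫⁻ x, ψ₂ (ξ, x) ^ (2:ℝ)) ^ (1/2:ℝ) with hg₂def
  set g₃ : ℝ → ℝ≥0∞ := fun ξ => (∫⁻ x, ψ₃ (ξ, x) ^ (2:ℝ)) ^ (1/2:ℝ) with hg₃def
  have mg₁ : Measurable g₁ :=
    (Measurable.lintegral_prod_right' (mψ₁.pow_const (2:ℝ))).pow_const _
  have mg₂ : Measurable g₂ :=
    (Measurable.lintegral_prod_right' (mψ₂.pow_const (2:ℝ))).pow_const _
  have mg₃ : Measurable g₃ :=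
    (Measurable.lintegral_prod_right' (mψ₃.pow_const (2:ℝ))).pow_const _
  -- L² identities
  have hnorm : ∀ (ψ : ℝ × ℝ → ℝ≥0∞) (f : ℝ × ℝ → ℝ), Measurable ψ →
      (ψ =ᵐ[volume] fun p => (‖f p‖₊ : ℝ≥0∞)) →
      (∫⁻ ξ, (∫⁻ x, ψ (ξ, x) ^ (2:ℝ)) ^ ((1/2:ℝ) * 2)) ^ (1/2:ℝ) = eLpNorm f 2 volume := by
    intro ψ f mψ hae
    have e1 : ∀ ξ : ℝ, ((∫⁻ x, ψ (ξ, x) ^ (2:ℝ)) ^ ((1/2:ℝ) * 2)) = ∫⁻ x, ψ (ξ, x) ^ (2:ℝ) := by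
      intro ξ; norm_num
    calc (∫⁻ ξ, (∫⁻ x, ψ (ξ, x) ^ (2:ℝ)) ^ ((1/2:ℝ)*2)) ^ (1/2:ℝ)
        = (∫⁻ ξ, ∫⁻ x, ψ (ξ, x) ^ (2:ℝ)) ^ (1/2:ℝ) := by simp_rw [e1]
      _ = (∫⁻ p : ℝ × ℝ, ψ p ^ (2:ℝ)) ^ (1/2:ℝ) := by
          congr 1
          rw [Measure.volume_eq_prod, lintegral_prod _ ((mψ.pow_const (2:ℝ)).aemeasurable)]
      _ = (∫⁻ p : ℝ × ℝ, ((‖f p‖₊ : ℝ≥0∞)) ^ (2:ℝ)) ^ (1/2:ℝ) := by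
          congr 1
          apply lintegral_congr_ae
          filter_upwards [hae] with p hp
          rw [hp]
      _ = eLpNorm f 2 volume := by
          rw [eLpNorm_eq_lintegral_rpow_enorm_toReal (by norm_num) (by norm_num)]
          norm_num
          rfl

  have hnorm₁ : (∫⁻ ξ, g₁ ξ ^ (2:ℝ)) ^ (1/2:ℝ) = eLpNorm f₁ 2 volume := by
    simp only [hg₁def]
    simp_rw [← ENNReal.rpow_mul]
    exact hnorm ψ₁ f₁ mψ₁ hae₁
  have hnorm₂ : (∫⁻ ξ, g₂ ξ ^ (2:ℝ)) ^ (1/2:ℝ) = eLpNorm f₂ 2 volume := by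
    simp only [hg₂def]
    simp_rw [← ENNReal.rpow_mul]
    exact hnorm ψ₂ f₂ mψ₂ hae₂
  have hnorm₃ : (∫⁻ ξ, g₃ ξ ^ (2:ℝ)) ^ (1/2:ℝ) = eLpNorm f₃ 2 volume := by
    simp only [hg₃def]
    simp_rw [← ENNReal.rpow_mul]
    exact hnorm ψ₃ f₃ mψ₃ hae₃
  -- supports of the g's
  have hgz₁ : ∀ ξ ∉ {x : ℝ | |x| ∈ Set.Icc ((2:ℝ)^(k₁-1)) ((2:ℝ)^(k₁+1))}, g₁ ξ = 0 := by
    intro ξ hξ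
    have hz : ∀ x : ℝ, ψ₁ (ξ, x) ^ (2:ℝ) = 0 := by
      intro x
      rw [hz₁ (ξ, x) (fun hmem => hξ hmem.1)]
      exact ENNReal.zero_rpow_of_pos (by norm_num)
    simp only [hg₁def]
    simp_rw [hz, lintegral_zero]
    exact ENNReal.zero_rpow_of_pos (by norm_num)
  have hgz₂ : ∀ ξ ∉ {x : ℝ | |x| ∈ Set.Icc ((2:ℝ)^(k₂-1)) ((2:ℝ)^(k₂+1))}, g₂ ξ = 0 := by
    intro ξ hξ
    have hz : ∀ x : ℝ, ψ₂ (ξ, x) ^ (2:ℝ) = 0 := by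
      intro x
      rw [hz₂ (ξ, x) (fun hmem => hξ hmem.1)]
      exact ENNReal.zero_rpow_of_pos (by norm_num)
    simp only [hg₂def]
    simp_rw [hz, lintegral_zero]
    exact ENNReal.zero_rpow_of_pos (by norm_num)
  have hgz₃ : ∀ ξ ∉ {x : ℝ | |x| ∈ Set.Icc ((2:ℝ)^(k₃-1)) ((2:ℝ)^(k₃+1))}, g₃ ξ = 0 := by
    intro ξ hξ
    have hz : ∀ x : ℝ, ψ₃ (ξ, x) ^ (2:ℝ) = 0 := by
      intro x
      rw [hz₃ (ξ, x) (fun hmem => hξ hmem.1)]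
      exact ENNReal.zero_rpow_of_pos (by norm_num)
    simp only [hg₃def]
    simp_rw [hz, lintegral_zero]
    exact ENNReal.zero_rpow_of_pos (by norm_num)
  -- modulation-level estimate
  set Vj := min (volume (Idyad j₁)) (min (volume (Idyad j₂)) (volume (Idyad j₃))) with hVjdef
  have hinner : ∀ a b : ℝ,
      (∫⁻ x, ∫⁻ y, ψ₁ (a, x) * (ψ₂ (b, y) * ψ₃ (a + b, x + y + Ω a b)))
        ≤ Vj ^ (1/2:ℝ) * (g₁ a * (g₂ b * g₃ (a + b))) := by
    intro a b
    have h := tri_core (fun x => ψ₁ (a, x)) (fun x => ψ₂ (b, x)) (fun x => ψ₃ (a + b, x))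
      (by fun_prop) (by fun_prop) (by fun_prop) (Ω a b)
      (Idyad_meas j₁) (Idyad_meas j₂) (Idyad_meas j₃)
      (fun x hx => hz₁ (a, x) (fun hmem => hx hmem.2))
      (fun x hx => hz₂ (b, x) (fun hmem => hx hmem.2))
      (fun x hx => hz₃ (a + b, x) (fun hmem => hx hmem.2))
    simp only [hVjdef, hg₁def, hg₂def, hg₃def]
    exact h
  -- the 4-fold lintegral
  have hVjfin : Vj ^ (1/2:ℝ) ≠ ⊤ := by
    refine ENNReal.rpow_ne_top_of_nonneg (by norm_num) ?_
    exact ne_top_of_le_ne_top ENNReal.ofReal_ne_top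
      (le_trans (min_le_left _ _) (Idyad_vol j₁))
  have hI : (∫⁻ a, ∫⁻ b, ∫⁻ x, ∫⁻ y, ψ₁ (a, x) * (ψ₂ (b, y) * ψ₃ (a + b, x + y + Ω a b)))
      ≤ Vj ^ (1/2:ℝ) * (∫⁻ a, ∫⁻ b, g₁ a * (g₂ b * g₃ (a + b))) := by
    calc (∫⁻ a, ∫⁻ b, ∫⁻ x, ∫⁻ y, ψ₁ (a, x) * (ψ₂ (b, y) * ψ₃ (a + b, x + y + Ω a b)))
        ≤ ∫⁻ a, ∫⁻ b, Vj ^ (1/2:ℝ) * (g₁ a * (g₂ b * g₃ (a + b))) :=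
          lintegral_mono fun a => lintegral_mono fun b => hinner a b
      _ = Vj ^ (1/2:ℝ) * (∫⁻ a, ∫⁻ b, g₁ a * (g₂ b * g₃ (a + b))) := by
          simp_rw [lintegral_const_mul' _ _ hVjfin]
  -- frequency-level estimate
  set Vk := min (volume {x : ℝ | |x| ∈ Set.Icc ((2:ℝ)^(k₁-1)) ((2:ℝ)^(k₁+1))})
    (min (volume {x : ℝ | |x| ∈ Set.Icc ((2:ℝ)^(k₂-1)) ((2:ℝ)^(k₂+1))})
      (volume {x : ℝ | |x| ∈ Set.Icc ((2:ℝ)^(k₃-1)) ((2:ℝ)^(k₃+1))})) with hVkdef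
  have houter : (∫⁻ a, ∫⁻ b, g₁ a * (g₂ b * g₃ (a + b)))
      ≤ Vk ^ (1/2:ℝ) * (eLpNorm f₁ 2 volume * (eLpNorm f₂ 2 volume * eLpNorm f₃ 2 volume)) := by
    have h := tri_core g₁ g₂ g₃ mg₁ mg₂ mg₃ 0 (kset_meas k₁) (kset_meas k₂) (kset_meas k₃)
      hgz₁ hgz₂ hgz₃
    simp only [add_zero] at h
    rw [hnorm₁, hnorm₂, hnorm₃] at h
    exact h
  -- numeric bounds on the volumes
  have hVjb : Vj ^ (1/2:ℝ) ≤ ENNReal.ofReal (2 * (2:ℝ) ^ (((min j₁ (min j₂ j₃) : ℕ) : ℝ) / 2)) := by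
    have h1 : Vj ≤ ENNReal.ofReal (2 * 2 ^ (min j₁ (min j₂ j₃) + 1)) := by
      rcases le_total j₁ (min j₂ j₃) with h | h
      · rw [min_eq_left h]
        exact le_trans (min_le_left _ _) (Idyad_vol j₁)
      · rw [min_eq_right h]
        rcases le_total j₂ j₃ with h2 | h2
        · rw [min_eq_left h2]
          exact le_trans (le_trans (min_le_right _ _) (min_le_left _ _)) (Idyad_vol j₂)
        · rw [min_eq_right h2]
          exact le_trans (le_trans (min_le_right _ _) (min_le_right _ _)) (Idyad_vol j₃)
    calc Vj ^ (1/2:ℝ) ≤ (ENNReal.ofReal (2 * 2 ^ (min j₁ (min j₂ j₃) + 1))) ^ (1/2:ℝ) :=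
          ENNReal.rpow_le_rpow h1 (by norm_num)
      _ = ENNReal.ofReal ((2 * 2 ^ (min j₁ (min j₂ j₃) + 1)) ^ (1/2:ℝ)) :=
          ENNReal.ofReal_rpow_of_pos (by positivity)
      _ = ENNReal.ofReal (2 * (2:ℝ) ^ (((min j₁ (min j₂ j₃) : ℕ) : ℝ) / 2)) := by
          rw [tri_pow_nat]
  have hVkb : Vk ^ (1/2:ℝ) ≤ ENNReal.ofReal (2 * (2:ℝ) ^ (((min k₁ (min k₂ k₃) : ℤ) : ℝ) / 2)) := by
    have h1 : Vk ≤ ENNReal.ofReal (2 * 2 ^ (min k₁ (min k₂ k₃) + 1)) := by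
      rcases le_total k₁ (min k₂ k₃) with h | h
      · rw [min_eq_left h]
        exact le_trans (min_le_left _ _) (kset_vol k₁)
      · rw [min_eq_right h]
        rcases le_total k₂ k₃ with h2 | h2
        · rw [min_eq_left h2]
          exact le_trans (le_trans (min_le_right _ _) (min_le_left _ _)) (kset_vol k₂)
        · rw [min_eq_right h2]
          exact le_trans (le_trans (min_le_right _ _) (min_le_right _ _)) (kset_vol k₃)
    calc Vk ^ (1/2:ℝ) ≤ (ENNReal.ofReal (2 * 2 ^ (min k₁ (min k₂ k₃) + 1))) ^ (1/2:ℝ) :=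
          ENNReal.rpow_le_rpow h1 (by norm_num)
      _ = ENNReal.ofReal ((2 * 2 ^ (min k₁ (min k₂ k₃) + 1)) ^ (1/2:ℝ)) :=
          ENNReal.ofReal_rpow_of_pos (by positivity)
      _ = ENNReal.ofReal (2 * (2:ℝ) ^ (((min k₁ (min k₂ k₃) : ℤ) : ℝ) / 2)) := by
          rw [tri_pow_int]
  -- combine the ENNReal estimates
  set cR : ℝ := 4 * (2:ℝ) ^ (((min j₁ (min j₂ j₃) : ℕ) : ℝ) / 2)
    * (2:ℝ) ^ (((min k₁ (min k₂ k₃) : ℤ) : ℝ) / 2) with hcRdef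
  have hE : (∫⁻ a, ∫⁻ b, ∫⁻ x, ∫⁻ y, ψ₁ (a, x) * (ψ₂ (b, y) * ψ₃ (a + b, x + y + Ω a b)))
      ≤ ENNReal.ofReal cR *
        (eLpNorm f₁ 2 volume * (eLpNorm f₂ 2 volume * eLpNorm f₃ 2 volume)) := by
    calc (∫⁻ a, ∫⁻ b, ∫⁻ x, ∫⁻ y, ψ₁ (a, x) * (ψ₂ (b, y) * ψ₃ (a + b, x + y + Ω a b)))
        ≤ Vj ^ (1/2:ℝ) * (∫⁻ a, ∫⁻ b, g₁ a * (g₂ b * g₃ (a + b))) := hI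
      _ ≤ Vj ^ (1/2:ℝ) * (Vk ^ (1/2:ℝ) *
            (eLpNorm f₁ 2 volume * (eLpNorm f₂ 2 volume * eLpNorm f₃ 2 volume))) :=
          mul_le_mul_right houter _
      _ ≤ ENNReal.ofReal (2 * (2:ℝ) ^ (((min j₁ (min j₂ j₃) : ℕ) : ℝ) / 2)) *
            (ENNReal.ofReal (2 * (2:ℝ) ^ (((min k₁ (min k₂ k₃) : ℤ) : ℝ) / 2)) *
              (eLpNorm f₁ 2 volume * (eLpNorm f₂ 2 volume * eLpNorm f₃ 2 volume))) :=
          mul_le_mul' hVjb (mul_le_mul_left hVkb _)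
      _ = ENNReal.ofReal cR *
            (eLpNorm f₁ 2 volume * (eLpNorm f₂ 2 volume * eLpNorm f₃ 2 volume)) := by
          rw [← mul_assoc, ← ENNReal.ofReal_mul (by positivity)]
          congr 2
          rw [hcRdef]
          ring
  have hEfin : ENNReal.ofReal cR *
      (eLpNorm f₁ 2 volume * (eLpNorm f₂ 2 volume * eLpNorm f₃ 2 volume)) ≠ ⊤ :=
    ENNReal.mul_ne_top ENNReal.ofReal_ne_top
      (ENNReal.mul_ne_top hM₁.eLpNorm_ne_top
        (ENNReal.mul_ne_top hM₂.eLpNorm_ne_top hM₃.eLpNorm_ne_top))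
  -- pointwise bound for the integrand
  have hpoint : ∀ a b x y : ℝ,
      ((‖f₁ (a, x) * f₂ (b, y) * f₃ (a + b, x + y + Ω a b)‖₊ : ℝ≥0∞))
        ≤ ψ₁ (a, x) * (ψ₂ (b, y) * ψ₃ (a + b, x + y + Ω a b)) := by
    intro a b x y
    calc ((‖f₁ (a, x) * f₂ (b, y) * f₃ (a + b, x + y + Ω a b)‖₊ : ℝ≥0∞))
        = (‖f₁ (a, x)‖₊ : ℝ≥0∞) * ((‖f₂ (b, y)‖₊ : ℝ≥0∞) *
            (‖f₃ (a + b, x + y + Ω a b)‖₊ : ℝ≥0∞)) := by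
          rw [nnnorm_mul, nnnorm_mul]
          push_cast
          ring
      _ ≤ _ := mul_le_mul' (hle₁ _) (mul_le_mul' (hle₂ _) (hle₃ _))
  -- from the Bochner integral to the lintegral
  have hlin : (∫⁻ a, ENNReal.ofReal
        ‖∫ b, ∫ x, ∫ y, f₁ (a, x) * f₂ (b, y) * f₃ (a + b, x + y + Ω a b)‖)
      ≤ ∫⁻ a, ∫⁻ b, ∫⁻ x, ∫⁻ y, ψ₁ (a, x) * (ψ₂ (b, y) * ψ₃ (a + b, x + y + Ω a b)) := by
    refine lintegral_mono fun a => ?_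
    rw [ofReal_norm]
    calc ((‖∫ b, ∫ x, ∫ y, f₁ (a, x) * f₂ (b, y) * f₃ (a + b, x + y + Ω a b)‖₊ : ℝ≥0∞))
        ≤ ∫⁻ b, (‖∫ x, ∫ y, f₁ (a, x) * f₂ (b, y) * f₃ (a + b, x + y + Ω a b)‖₊ : ℝ≥0∞) :=
          enorm_integral_le_lintegral_enorm _
      _ ≤ ∫⁻ b, ∫⁻ x, (‖∫ y, f₁ (a, x) * f₂ (b, y) * f₃ (a + b, x + y + Ω a b)‖₊ : ℝ≥0∞) :=
          lintegral_mono fun b => enorm_integral_le_lintegral_enorm _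
      _ ≤ ∫⁻ b, ∫⁻ x, ∫⁻ y,
            (‖f₁ (a, x) * f₂ (b, y) * f₃ (a + b, x + y + Ω a b)‖₊ : ℝ≥0∞) :=
          lintegral_mono fun b => lintegral_mono fun x =>
            enorm_integral_le_lintegral_enorm _
      _ ≤ ∫⁻ b, ∫⁻ x, ∫⁻ y, ψ₁ (a, x) * (ψ₂ (b, y) * ψ₃ (a + b, x + y + Ω a b)) :=
          lintegral_mono fun b => lintegral_mono fun x => lintegral_mono fun y =>
            hpoint a b x y
  -- conclusion
  calc (∫ ξ₁ : ℝ, ∫ ξ₂ : ℝ, ∫ μ₁ : ℝ, ∫ μ₂ : ℝ,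
        f₁ (ξ₁, μ₁) * f₂ (ξ₂, μ₂) * f₃ (ξ₁ + ξ₂, μ₁ + μ₂ + Ω ξ₁ ξ₂))
      ≤ ‖∫ ξ₁ : ℝ, ∫ ξ₂ : ℝ, ∫ μ₁ : ℝ, ∫ μ₂ : ℝ,
          f₁ (ξ₁, μ₁) * f₂ (ξ₂, μ₂) * f₃ (ξ₁ + ξ₂, μ₁ + μ₂ + Ω ξ₁ ξ₂)‖ := by
        rw [Real.norm_eq_abs]; exact le_abs_self _
    _ ≤ (∫⁻ a, ENNReal.ofReal
          ‖∫ b, ∫ x, ∫ y, f₁ (a, x) * f₂ (b, y) * f₃ (a + b, x + y + Ω a b)‖).toReal :=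
        norm_integral_le_lintegral_norm _
    _ ≤ (ENNReal.ofReal cR *
          (eLpNorm f₁ 2 volume * (eLpNorm f₂ 2 volume * eLpNorm f₃ 2 volume))).toReal :=
        ENNReal.toReal_mono hEfin (le_trans hlin hE)
    _ = 4 * (2:ℝ) ^ (((min j₁ (min j₂ j₃) : ℕ) : ℝ) / 2)
          * (2:ℝ) ^ (((min k₁ (min k₂ k₃) : ℤ) : ℝ) / 2)
          * (eLpNorm f₁ 2 volume).toReal * (eLpNorm f₂ 2 volume).toReal *
            (eLpNorm f₃ 2 volume).toReal := by
        rw [ENNReal.toReal_mul, ENNReal.toReal_mul, ENNReal.toReal_mul,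
          ENNReal.toReal_ofReal (by positivity), hcRdef]
        ring
end

section
/- Let 0 < λ ≤ 1 and let Ω₂(ξ₁,ξ₂) = -λξ₁² + λξ₂² - (ξ₁+ξ₂)³. Let g₁, g₂ : ℝ → [0,∞) be L² functions supported in [2^{k₁-1}, 2^{k₁+1}] and [2^{k₂-1}, 2^{k₂+1}] respectively, and let g : ℝ² → [0,∞) be an L² function supported in [2^{k₃-1}, 2^{k₃+1}] × ℝ. Then ∫_{ℝ²} g₁(ξ₁) g₂(ξ₂) g(ξ₁+ξ₂, Ω₂(ξ₁,ξ₂)) dξ₁ dξ₂ ≤ C λ^{-1/2} 2^{-k₃/2} ‖g₁‖_{L²} ‖g₂‖_{L²} ‖g‖_{L²} for an absolute constant C. -/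
open MeasureTheory
open scoped ENNReal NNReal

/-- The resonance function Ω₂ for the coupling term `∂ₓ(|u|²)`. -/
def Omega2 (lam ξ₁ ξ₂ : ℝ) : ℝ := -lam * ξ₁^2 + lam * ξ₂^2 - (ξ₁ + ξ₂)^3

private lemma integral_le_toReal_lintegral {α : Type*} [MeasurableSpace α] {μ : Measure α}
    {f : α → ℝ} (h0 : ∀ x, 0 ≤ f x) :
    ∫ x, f x ∂μ ≤ (∫⁻ x, ENNReal.ofReal (f x) ∂μ).toReal := by
  by_cases hf : Integrable f μ
  · rw [integral_eq_lintegral_of_nonneg_ae (Filter.Eventually.of_forall h0) hf.1]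
  · rw [integral_undef hf]
    exact ENNReal.toReal_nonneg

private lemma lintegral_comp_affine (f : ℝ → ℝ≥0∞) (hf : Measurable f) {a : ℝ} (ha : a ≠ 0)
    (c : ℝ) : ∫⁻ x, f (a * x + c) = ENNReal.ofReal |a⁻¹| * ∫⁻ x, f x := by
  have h2 : ∫⁻ x, f (a * x + c) = ∫⁻ y, f (y + c) ∂(Measure.map (a * ·) volume) :=
    (lintegral_map (hf.comp (measurable_add_const c)) (measurable_const_mul a)).symm
  rw [h2, Real.map_volume_mul_left ha, lintegral_smul_measure,
    lintegral_add_right_eq_self (fun y => f y) c, smul_eq_mul]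

private lemma exists_nice_rep {α : Type*} [MeasurableSpace α] {μ : Measure α}
    {f : α → ℝ} (hf : AEStronglyMeasurable f μ) (h0 : ∀ x, 0 ≤ f x)
    {S : Set α} (hS : MeasurableSet S) (hsupp : Function.support f ⊆ S) :
    ∃ f' : α → ℝ, Measurable f' ∧ (∀ x, 0 ≤ f' x) ∧ (∀ x, x ∉ S → f' x = 0) ∧ f' =ᵐ[μ] f := by
  classical
  refine ⟨S.indicator (fun x => max (hf.mk f x) 0),
    ((hf.stronglyMeasurable_mk.measurable).max measurable_const).indicator hS, fun x => ?_,
    fun x hx => Set.indicator_of_notMem hx _, ?_⟩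
  · exact Set.indicator_apply_nonneg fun _ => le_max_right _ _
  · filter_upwards [hf.ae_eq_mk] with x hx
    by_cases hxS : x ∈ S
    · rw [Set.indicator_of_mem hxS, ← hx, max_eq_left (h0 x)]
    · rw [Set.indicator_of_notMem hxS]
      exact (Function.notMem_support.mp fun hsup => hxS (hsupp hsup)).symm

theorem change_of_variables_estimate :
    ∃ C > 0, ∀ (lam : ℝ) (k₁ k₂ k₃ : ℤ) (g₁ g₂ : ℝ → ℝ) (g : ℝ × ℝ → ℝ),
      0 < lam → lam ≤ 1 →
      (∀ x, 0 ≤ g₁ x) → (∀ x, 0 ≤ g₂ x) → (∀ p, 0 ≤ g p) →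
      MemLp g₁ 2 volume → MemLp g₂ 2 volume → MemLp g 2 volume →
      Function.support g₁ ⊆ Set.Icc ((2:ℝ)^(k₁-1)) ((2:ℝ)^(k₁+1)) →
      Function.support g₂ ⊆ Set.Icc ((2:ℝ)^(k₂-1)) ((2:ℝ)^(k₂+1)) →
      Function.support g ⊆ Set.Icc ((2:ℝ)^(k₃-1)) ((2:ℝ)^(k₃+1)) ×ˢ Set.univ →
      (∫ ξ₁ : ℝ, ∫ ξ₂ : ℝ, g₁ ξ₁ * g₂ ξ₂ * g (ξ₁ + ξ₂, Omega2 lam ξ₁ ξ₂)) ≤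
        C * lam ^ (-(1:ℝ)/2) * (2:ℝ) ^ (-((k₃ : ℝ)) / 2) *
          (eLpNorm g₁ 2 volume).toReal * (eLpNorm g₂ 2 volume).toReal *
            (eLpNorm g 2 volume).toReal := by
  refine ⟨16, by norm_num, ?_⟩
  intro lam k₁ k₂ k₃ g₁ g₂ g hlam _hlam1 h₁0 h₂0 h₀ hmem₁ hmem₂ hmem hsupp₁ hsupp₂ hsupp
  classical
  obtain ⟨f₁, hf₁m, hf₁0, hf₁s, hf₁e⟩ := exists_nice_rep hmem₁.1 h₁0 measurableSet_Icc hsupp₁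
  obtain ⟨f₂, hf₂m, hf₂0, hf₂s, hf₂e⟩ := exists_nice_rep hmem₂.1 h₂0 measurableSet_Icc hsupp₂
  obtain ⟨f, hfm, hf0, hfs, hfe⟩ :=
    exists_nice_rep hmem.1 h₀ (measurableSet_Icc.prod MeasurableSet.univ) hsupp
  set a₁ : ℝ → ℝ≥0∞ := fun x => ENNReal.ofReal (f₁ x) with ha₁def
  set a₂ : ℝ → ℝ≥0∞ := fun x => ENNReal.ofReal (f₂ x) with ha₂def
  set a : ℝ × ℝ → ℝ≥0∞ := fun p => ENNReal.ofReal (f p) with hadef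
  have ha₁m : Measurable a₁ := ENNReal.measurable_ofReal.comp hf₁m
  have ha₂m : Measurable a₂ := ENNReal.measurable_ofReal.comp hf₂m
  have ham : Measurable a := ENNReal.measurable_ofReal.comp hfm
  set N₁ := eLpNorm g₁ 2 volume with hN₁def
  set N₂ := eLpNorm g₂ 2 volume with hN₂def
  set N₃ := eLpNorm g 2 volume with hN₃def
  have hN₁ne : N₁ ≠ ∞ := hmem₁.2.ne
  have hN₂ne : N₂ ≠ ∞ := hmem₂.2.ne
  have hN₃ne : N₃ ≠ ∞ := hmem.2.ne
  have hp2 : ((2:ℝ≥0∞)).toReal = 2 := by simp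
  -- ∫ a² = N²
  have sqNorm : ∀ {β : Type} [MeasurableSpace β] (μ : Measure β) (h : β → ℝ) (b : β → ℝ≥0∞),
      (∀ x, 0 ≤ h x) → (b = fun x => ENNReal.ofReal (h x)) → ∀ (G : β → ℝ),
      G =ᵐ[μ] h → eLpNorm G 2 μ ^ (2:ℝ) = ∫⁻ x, b x ^ (2:ℝ) ∂μ := by
    intro β _ μ h b h0 hb G hGh
    rw [eLpNorm_congr_ae hGh, eLpNorm_eq_lintegral_rpow_enorm_toReal (by norm_num) (by norm_num),
      hp2, ← ENNReal.rpow_mul]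
    norm_num
    exact lintegral_congr fun x => by rw [hb, Real.enorm_eq_ofReal (h0 x)]
  have hN₁' : N₁ ^ (2:ℝ) = ∫⁻ x, a₁ x ^ (2:ℝ) :=
    sqNorm volume f₁ a₁ hf₁0 ha₁def g₁ hf₁e.symm
  have hN₂' : N₂ ^ (2:ℝ) = ∫⁻ x, a₂ x ^ (2:ℝ) :=
    sqNorm volume f₂ a₂ hf₂0 ha₂def g₂ hf₂e.symm
  have hN₃' : N₃ ^ (2:ℝ) = ∫⁻ p, a p ^ (2:ℝ) :=
    sqNorm volume f a hf0 hadef g hfe.symm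
  have h2p : (0:ℝ) < (2:ℝ)^(k₃-1) := zpow_pos two_pos _
  -- the bad set where g and f disagree after composing with φ is null
  have hT : volume {ξ : ℝ × ℝ |
      g (ξ.1 + ξ.2, Omega2 lam ξ.1 ξ.2) ≠ f (ξ.1 + ξ.2, Omega2 lam ξ.1 ξ.2)} = 0 := by
    have hN : volume {p : ℝ × ℝ | g p ≠ f p} = 0 := by
      have h' : ∀ᵐ p : ℝ × ℝ, g p = f p := hfe.symm
      simpa [ae_iff] using h'
    obtain ⟨N₀, hNsub, hN₀m, hN₀0⟩ := exists_measurable_superset_of_null hN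
    set V : Set (ℝ × ℝ) := {q | 0 < q.1} with hVdef
    set ψ : ℝ × ℝ → ℝ × ℝ := fun q =>
      ((q.1 - (q.2 + q.1^3)/(lam*q.1))/2, (q.1 + (q.2 + q.1^3)/(lam*q.1))/2) with hψdef
    have hψd : DifferentiableOn ℝ ψ V := by
      have hd : DifferentiableOn ℝ (fun q : ℝ × ℝ => (q.2 + q.1^3)/(lam*q.1)) V := by
        simp only [div_eq_mul_inv]
        intro q hq
        have hq1 : (0:ℝ) < q.1 := hq
        have hnum : DifferentiableAt ℝ (fun q : ℝ × ℝ => q.2 + q.1^3) q :=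
          (differentiable_snd.add (differentiable_fst.pow 3)).differentiableAt
        have hden : DifferentiableAt ℝ (fun q : ℝ × ℝ => lam * q.1) q :=
          ((differentiable_const lam).mul differentiable_fst).differentiableAt
        exact (hnum.mul (hden.inv (ne_of_gt (mul_pos hlam hq1)))).differentiableWithinAt
      have hfst : DifferentiableOn ℝ (fun q : ℝ × ℝ => q.1) V :=
        differentiable_fst.differentiableOn
      have hsub : DifferentiableOn ℝ
          (fun q : ℝ × ℝ => (q.1 - (q.2 + q.1^3)/(lam*q.1))/2) V := by
        simp only [div_eq_mul_inv]
        exact DifferentiableOn.mul_const (hfst.sub hd) _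
      have hadd : DifferentiableOn ℝ
          (fun q : ℝ × ℝ => (q.1 + (q.2 + q.1^3)/(lam*q.1))/2) V := by
        simp only [div_eq_mul_inv]
        exact DifferentiableOn.mul_const (hfst.add hd) _
      exact hsub.prodMk hadd
    have hTsub : {ξ : ℝ × ℝ |
        g (ξ.1 + ξ.2, Omega2 lam ξ.1 ξ.2) ≠ f (ξ.1 + ξ.2, Omega2 lam ξ.1 ξ.2)} ⊆
        ψ '' (N₀ ∩ V) := by
      rintro ⟨ξ₁, ξ₂⟩ hξ
      simp only [Set.mem_setOf_eq] at hξ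
      have hpos : (0:ℝ) < ξ₁ + ξ₂ := by
        by_contra hle
        push_neg at hle
        have hnot : (ξ₁ + ξ₂, Omega2 lam ξ₁ ξ₂) ∉
            Set.Icc ((2:ℝ)^(k₃-1)) ((2:ℝ)^(k₃+1)) ×ˢ (Set.univ : Set ℝ) := by
          rintro ⟨hmem', -⟩
          have h1' : (2:ℝ)^(k₃-1) ≤ ξ₁ + ξ₂ := hmem'.1
          linarith
        have hg0 : g (ξ₁ + ξ₂, Omega2 lam ξ₁ ξ₂) = 0 := by
          by_contra hne
          exact hnot (hsupp hne)
        rw [hg0, hfs _ hnot] at hξ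
        exact hξ rfl
      refine ⟨(ξ₁ + ξ₂, Omega2 lam ξ₁ ξ₂), ⟨hNsub hξ, hpos⟩, ?_⟩
      have hsne : ξ₁ + ξ₂ ≠ 0 := ne_of_gt hpos
      have hlne : lam ≠ 0 := ne_of_gt hlam
      have hmul : lam * (ξ₁ + ξ₂) ≠ 0 := mul_ne_zero hlne hsne
      rw [hψdef]
      refine Prod.ext ?_ ?_ <;>
      · simp only [Omega2]
        field_simp
        ring
    refine measure_mono_null hTsub ?_
    exact addHaar_image_eq_zero_of_differentiableOn_of_addHaar_eq_zero volume
      (hψd.mono Set.inter_subset_right)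
      (measure_mono_null Set.inter_subset_left hN₀0)
  have haT : ∀ᵐ ξ₁ : ℝ, ∀ᵐ ξ₂ : ℝ,
      g (ξ₁ + ξ₂, Omega2 lam ξ₁ ξ₂) = f (ξ₁ + ξ₂, Omega2 lam ξ₁ ξ₂) := by
    obtain ⟨T₀, hT₀sub, hT₀m, hT₀0⟩ := exists_measurable_superset_of_null hT
    have h1 : ∀ᵐ p : ℝ × ℝ ∂((volume : Measure ℝ).prod volume), p ∉ T₀ := by
      rw [← Measure.volume_eq_prod]
      exact measure_eq_zero_iff_ae_notMem.mp hT₀0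
    filter_upwards [Measure.ae_ae_of_ae_prod h1] with ξ₁ h2
    filter_upwards [h2] with ξ₂ h3
    by_contra hne
    exact h3 (hT₀sub hne)
  -- main quantities
  set D : ℝ≥0∞ := ENNReal.ofReal (lam * (2:ℝ)^k₃) with hDdef
  set Q : ℝ → ℝ → ℝ≥0∞ := fun ξ₁ s =>
    a₁ ξ₁ * a₂ (s - ξ₁) * a (s, lam*s^2 - 2*lam*s*ξ₁ - s^3) with hQdef
  have htrans : ∀ ξ₁ : ℝ,
      (∫⁻ ξ₂, a₁ ξ₁ * a₂ ξ₂ * a (ξ₁ + ξ₂, Omega2 lam ξ₁ ξ₂)) = ∫⁻ s, Q ξ₁ s := by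
    intro ξ₁
    have hpt : ∀ ξ₂ : ℝ, a₁ ξ₁ * a₂ ξ₂ * a (ξ₁ + ξ₂, Omega2 lam ξ₁ ξ₂) = Q ξ₁ (ξ₁ + ξ₂) := by
      intro ξ₂
      have h1 : ξ₁ + ξ₂ - ξ₁ = ξ₂ := by ring
      have h2 : (ξ₁ + ξ₂, Omega2 lam ξ₁ ξ₂) = (ξ₁ + ξ₂,
          lam*(ξ₁+ξ₂)^2 - 2*lam*(ξ₁+ξ₂)*ξ₁ - (ξ₁+ξ₂)^3) := by
        simp only [Prod.mk.injEq, Omega2]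
        exact ⟨trivial, by ring⟩
      simp only [hQdef, h1, ← h2]
    rw [lintegral_congr hpt]
    exact lintegral_add_left_eq_self (Q ξ₁) ξ₁
  have hc : ∀ᵐ ξ₁ : ℝ,
      (∫⁻ ξ₂, ENNReal.ofReal (g₁ ξ₁ * g₂ ξ₂ * g (ξ₁ + ξ₂, Omega2 lam ξ₁ ξ₂))) =
        ∫⁻ s, Q ξ₁ s := by
    filter_upwards [hf₁e, haT] with ξ₁ h1 h2
    rw [← htrans ξ₁]
    apply lintegral_congr_ae
    filter_upwards [hf₂e, h2] with ξ₂ hg2 hgf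
    rw [← h1, ← hg2, hgf, ha₁def, ha₂def, hadef]
    simp only
    rw [ENNReal.ofReal_mul (mul_nonneg (hf₁0 _) (hf₂0 _)), ENNReal.ofReal_mul (hf₁0 _)]
  set K : ℝ → ℝ≥0∞ := fun s => ∫⁻ ξ₁, a₁ ξ₁ ^ (2:ℝ) * a₂ (s - ξ₁) ^ (2:ℝ) with hKdef
  set M : ℝ → ℝ≥0∞ := fun s => ∫⁻ t, a (s, t) ^ (2:ℝ) with hMdef
  have hKm : Measurable K := by
    rw [hKdef]
    exact Measurable.lintegral_prod_right'
      (f := fun p : ℝ × ℝ => a₁ p.2 ^ (2:ℝ) * a₂ (p.1 - p.2) ^ (2:ℝ))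
      (((ha₁m.comp measurable_snd).pow_const _).mul
        ((ha₂m.comp (measurable_fst.sub measurable_snd)).pow_const _))
  have hMm : Measurable M := by
    rw [hMdef]
    exact Measurable.lintegral_prod_right' (ham.pow_const _)
  have hconj : Real.HolderConjugate 2 2 := Real.HolderConjugate.two_two
  have hDpos : 0 < D := ENNReal.ofReal_pos.mpr (by positivity)
  have hDinvne : D⁻¹ ≠ ∞ := ENNReal.inv_ne_top.mpr (ne_of_gt hDpos)
  have hDinv_ne : D⁻¹ ^ ((1:ℝ)/2) ≠ ∞ :=
    ENNReal.rpow_ne_top_of_nonneg (by norm_num) hDinvne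
  have hGs : ∀ s : ℝ,
      (∫⁻ ξ₁, Q ξ₁ s) ≤ D⁻¹ ^ ((1:ℝ)/2) * (K s ^ ((1:ℝ)/2) * M s ^ ((1:ℝ)/2)) := by
    intro s
    by_cases hsI : s ∈ Set.Icc ((2:ℝ)^(k₃-1)) ((2:ℝ)^(k₃+1))
    · have hs0 : (0:ℝ) < s := lt_of_lt_of_le h2p hsI.1
      have hb0 : (0:ℝ) < 2 * lam * s := by positivity
      set u : ℝ → ℝ≥0∞ := fun ξ₁ => a₁ ξ₁ * a₂ (s - ξ₁) with hudef
      set w : ℝ → ℝ≥0∞ := fun ξ₁ => a (s, lam*s^2 - 2*lam*s*ξ₁ - s^3) with hwdef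
      have hum : Measurable u := ha₁m.mul (ha₂m.comp (measurable_const.sub measurable_id))
      have hwm : Measurable w := ham.comp (measurable_const.prodMk (by fun_prop))
      have hQuw : ∫⁻ ξ₁, Q ξ₁ s = ∫⁻ ξ₁, (u * w) ξ₁ := by
        apply lintegral_congr
        intro ξ₁
        simp only [hQdef, hudef, hwdef, Pi.mul_apply]
      have hH := ENNReal.lintegral_mul_le_Lp_mul_Lq volume hconj hum.aemeasurable hwm.aemeasurable
      have hu2 : (∫⁻ ξ₁, u ξ₁ ^ (2:ℝ)) = K s := by
        rw [hKdef]
        apply lintegral_congr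
        intro ξ₁
        simp only [hudef]
        exact ENNReal.mul_rpow_of_nonneg _ _ (by norm_num)
      have hw2 : (∫⁻ ξ₁, w ξ₁ ^ (2:ℝ)) = ENNReal.ofReal ((2*lam*s)⁻¹) * M s := by
        have hmeas : Measurable (fun t : ℝ => a (s, t) ^ (2:ℝ)) :=
          (ham.comp (measurable_const.prodMk measurable_id)).pow_const _
        have haff := lintegral_comp_affine (fun t => a (s, t) ^ (2:ℝ)) hmeas
          (a := -(2*lam*s)) (neg_ne_zero.mpr (ne_of_gt hb0)) (lam*s^2 - s^3)
        calc (∫⁻ ξ₁, w ξ₁ ^ (2:ℝ))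
            = ∫⁻ ξ₁, (fun t => a (s, t) ^ (2:ℝ)) (-(2*lam*s) * ξ₁ + (lam*s^2 - s^3)) := by
              apply lintegral_congr
              intro ξ₁
              show w ξ₁ ^ (2:ℝ) = a (s, -(2*lam*s) * ξ₁ + (lam*s^2 - s^3)) ^ (2:ℝ)
              rw [hwdef]
              have harg : lam*s^2 - 2*lam*s*ξ₁ - s^3 = -(2*lam*s) * ξ₁ + (lam*s^2 - s^3) := by
                ring
              simp only [harg]
          _ = ENNReal.ofReal |(-(2*lam*s))⁻¹| * ∫⁻ t, a (s, t) ^ (2:ℝ) := haff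
          _ = ENNReal.ofReal ((2*lam*s)⁻¹) * M s := by
              rw [hMdef, inv_neg, abs_neg, abs_of_pos (inv_pos.mpr hb0)]
      have hMD : ENNReal.ofReal ((2*lam*s)⁻¹) ≤ D⁻¹ := by
        rw [ENNReal.ofReal_inv_of_pos hb0, hDdef]
        apply ENNReal.inv_le_inv'
        apply ENNReal.ofReal_le_ofReal
        have h2 : (2:ℝ)^(k₃:ℤ) = 2 * 2^(k₃-1) := by
          rw [← zpow_one_add₀ (two_ne_zero : (2:ℝ) ≠ 0)]
          congr 1
          ring
        nlinarith [hsI.1, hlam.le]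
      calc (∫⁻ ξ₁, Q ξ₁ s) = ∫⁻ ξ₁, (u * w) ξ₁ := hQuw
        _ ≤ (∫⁻ ξ₁, u ξ₁ ^ (2:ℝ)) ^ ((1:ℝ)/2) * (∫⁻ ξ₁, w ξ₁ ^ (2:ℝ)) ^ ((1:ℝ)/2) := hH
        _ = K s ^ ((1:ℝ)/2) * (ENNReal.ofReal ((2*lam*s)⁻¹) * M s) ^ ((1:ℝ)/2) := by
            rw [hu2, hw2]
        _ ≤ K s ^ ((1:ℝ)/2) * (D⁻¹ * M s) ^ ((1:ℝ)/2) := by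
            apply mul_le_mul_right
            apply ENNReal.rpow_le_rpow _ (by norm_num)
            exact mul_le_mul_left hMD _
        _ = D⁻¹ ^ ((1:ℝ)/2) * (K s ^ ((1:ℝ)/2) * M s ^ ((1:ℝ)/2)) := by
            rw [ENNReal.mul_rpow_of_nonneg _ _ (by norm_num)]
            ring
    · have hz : ∀ ξ₁ : ℝ, Q ξ₁ s = 0 := by
        intro ξ₁
        have h0' : f (s, lam*s^2 - 2*lam*s*ξ₁ - s^3) = 0 := hfs _ (fun hp => hsI hp.1)
        simp only [hQdef, hadef, h0', ENNReal.ofReal_zero, mul_zero]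
      simp only [hz]
      simp
  set I₀ := ∫⁻ ξ₁, ∫⁻ ξ₂, ENNReal.ofReal (g₁ ξ₁ * g₂ ξ₂ * g (ξ₁ + ξ₂, Omega2 lam ξ₁ ξ₂))
    with hI₀def
  have hQum : Measurable (fun p : ℝ × ℝ => Q p.1 p.2) := by
    simp only [hQdef]
    exact ((ha₁m.comp measurable_fst).mul
      (ha₂m.comp (measurable_snd.sub measurable_fst))).mul
      (ham.comp (measurable_snd.prodMk (by fun_prop)))
  have e2 : I₀ = ∫⁻ s, ∫⁻ ξ₁, Q ξ₁ s := by
    rw [hI₀def, lintegral_congr_ae hc]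
    exact lintegral_lintegral_swap hQum.aemeasurable
  have ha₂ne : ∀ x, a₂ x ^ (2:ℝ) ≠ ∞ := fun x =>
    ENNReal.rpow_ne_top_of_nonneg (by norm_num) (by simp [ha₂def])
  have ha₁ne : ∀ x, a₁ x ^ (2:ℝ) ≠ ∞ := fun x =>
    ENNReal.rpow_ne_top_of_nonneg (by norm_num) (by simp [ha₁def])
  have hKint : ∫⁻ s, K s = N₁ ^ (2:ℝ) * N₂ ^ (2:ℝ) := by
    have hKswap : ∫⁻ s, K s = ∫⁻ ξ₁, ∫⁻ s, a₁ ξ₁ ^ (2:ℝ) * a₂ (s - ξ₁) ^ (2:ℝ) := by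
      rw [hKdef]
      exact (lintegral_lintegral_swap (((ha₁m.comp measurable_fst).pow_const _).mul
        ((ha₂m.comp (measurable_snd.sub measurable_fst)).pow_const _)).aemeasurable).symm
    rw [hKswap]
    have hinner : ∀ ξ₁ : ℝ,
        (∫⁻ s, a₁ ξ₁ ^ (2:ℝ) * a₂ (s - ξ₁) ^ (2:ℝ)) = a₁ ξ₁ ^ (2:ℝ) * N₂ ^ (2:ℝ) := by
      intro ξ₁
      rw [lintegral_const_mul' _ _ (ha₁ne ξ₁)]
      congr 1
      have hshift := lintegral_sub_right_eq_self (μ := volume) (fun t => a₂ t ^ (2:ℝ)) ξ₁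
      rw [hshift]
      exact hN₂'.symm
    rw [lintegral_congr hinner,
      lintegral_mul_const' _ _ (ENNReal.rpow_ne_top_of_nonneg (by norm_num) hN₂ne), ← hN₁']
  have hMint : ∫⁻ s, M s = N₃ ^ (2:ℝ) := by
    have hprod := lintegral_prod (μ := volume) (ν := volume) (fun p : ℝ × ℝ => a p ^ (2:ℝ)) (ham.pow_const _).aemeasurable
    rw [← Measure.volume_eq_prod] at hprod
    rw [hMdef, ← hprod]
    exact hN₃'.symm
  have hKMle : ∫⁻ s, K s ^ ((1:ℝ)/2) * M s ^ ((1:ℝ)/2) ≤ (N₁ * N₂) * N₃ := by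
    have hH2 := ENNReal.lintegral_mul_le_Lp_mul_Lq volume hconj
      (hKm.pow_const ((1:ℝ)/2)).aemeasurable (hMm.pow_const ((1:ℝ)/2)).aemeasurable
    have hKK : ∀ s:ℝ, (K s ^ ((1:ℝ)/2)) ^ (2:ℝ) = K s := fun s => by
      rw [← ENNReal.rpow_mul]
      norm_num
    have hMM : ∀ s:ℝ, (M s ^ ((1:ℝ)/2)) ^ (2:ℝ) = M s := fun s => by
      rw [← ENNReal.rpow_mul]
      norm_num
    calc ∫⁻ s, K s ^ ((1:ℝ)/2) * M s ^ ((1:ℝ)/2)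
        ≤ (∫⁻ s, (K s ^ ((1:ℝ)/2)) ^ (2:ℝ)) ^ ((1:ℝ)/2) *
          (∫⁻ s, (M s ^ ((1:ℝ)/2)) ^ (2:ℝ)) ^ ((1:ℝ)/2) := hH2
      _ = (N₁^(2:ℝ) * N₂^(2:ℝ)) ^ ((1:ℝ)/2) * (N₃^(2:ℝ)) ^ ((1:ℝ)/2) := by
          rw [lintegral_congr hKK, lintegral_congr hMM, hKint, hMint]
      _ = (N₁ * N₂) * N₃ := by
          rw [ENNReal.mul_rpow_of_nonneg _ _ (by norm_num), ← ENNReal.rpow_mul,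
            ← ENNReal.rpow_mul, ← ENNReal.rpow_mul]
          norm_num
  have hI₀le : I₀ ≤ D⁻¹ ^ ((1:ℝ)/2) * ((N₁ * N₂) * N₃) := by
    rw [e2]
    calc ∫⁻ s, ∫⁻ ξ₁, Q ξ₁ s
        ≤ ∫⁻ s, D⁻¹ ^ ((1:ℝ)/2) * (K s ^ ((1:ℝ)/2) * M s ^ ((1:ℝ)/2)) := lintegral_mono hGs
      _ = D⁻¹ ^ ((1:ℝ)/2) * ∫⁻ s, K s ^ ((1:ℝ)/2) * M s ^ ((1:ℝ)/2) :=
          lintegral_const_mul' _ _ hDinv_ne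
      _ ≤ _ := mul_le_mul_right hKMle _
  set n₁ := N₁.toReal with hn₁def
  set n₂ := N₂.toReal with hn₂def
  set n₃ := N₃.toReal with hn₃def
  have hbase : (0:ℝ) < lam * (2:ℝ)^k₃ := by positivity
  set R₀ : ℝ := ((lam * (2:ℝ)^k₃)⁻¹) ^ ((1:ℝ)/2) * (n₁ * n₂ * n₃) with hR₀def
  have hBof : D⁻¹ ^ ((1:ℝ)/2) * ((N₁ * N₂) * N₃) = ENNReal.ofReal R₀ := by
    rw [hDdef, ← ENNReal.ofReal_inv_of_pos hbase,
      ENNReal.ofReal_rpow_of_pos (inv_pos.mpr hbase),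
      show N₁ = ENNReal.ofReal n₁ from (ENNReal.ofReal_toReal hN₁ne).symm,
      show N₂ = ENNReal.ofReal n₂ from (ENNReal.ofReal_toReal hN₂ne).symm,
      show N₃ = ENNReal.ofReal n₃ from (ENNReal.ofReal_toReal hN₃ne).symm,
      ← ENNReal.ofReal_mul ENNReal.toReal_nonneg,
      ← ENNReal.ofReal_mul (mul_nonneg ENNReal.toReal_nonneg ENNReal.toReal_nonneg),
      ← ENNReal.ofReal_mul (Real.rpow_nonneg (inv_nonneg.mpr hbase.le) _), hR₀def]
  have hR₀ : (0:ℝ) ≤ R₀ := by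
    rw [hR₀def]
    have h1 : (0:ℝ) ≤ ((lam * (2:ℝ)^k₃)⁻¹) ^ ((1:ℝ)/2) :=
      Real.rpow_nonneg (inv_nonneg.mpr hbase.le) _
    have h2 : (0:ℝ) ≤ n₁ * n₂ * n₃ :=
      mul_nonneg (mul_nonneg ENNReal.toReal_nonneg ENNReal.toReal_nonneg)
        ENNReal.toReal_nonneg
    exact mul_nonneg h1 h2
  have hfinal₀ : I₀ ≤ ENNReal.ofReal R₀ := hBof ▸ hI₀le
  have hnn : ∀ ξ₁ : ℝ, 0 ≤ ∫ ξ₂, g₁ ξ₁ * g₂ ξ₂ * g (ξ₁ + ξ₂, Omega2 lam ξ₁ ξ₂) :=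
    fun ξ₁ => integral_nonneg fun ξ₂ => mul_nonneg (mul_nonneg (h₁0 _) (h₂0 _)) (h₀ _)
  have hstep1 : (∫ ξ₁, ∫ ξ₂, g₁ ξ₁ * g₂ ξ₂ * g (ξ₁ + ξ₂, Omega2 lam ξ₁ ξ₂)) ≤
      (∫⁻ ξ₁, ENNReal.ofReal (∫ ξ₂, g₁ ξ₁ * g₂ ξ₂ * g (ξ₁ + ξ₂, Omega2 lam ξ₁ ξ₂))).toReal :=
    integral_le_toReal_lintegral hnn
  have hstep2 : (∫⁻ ξ₁, ENNReal.ofReal (∫ ξ₂, g₁ ξ₁ * g₂ ξ₂ * g (ξ₁ + ξ₂, Omega2 lam ξ₁ ξ₂)))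
      ≤ I₀ := by
    rw [hI₀def]
    refine lintegral_mono fun ξ₁ => ?_
    exact ENNReal.ofReal_le_of_le_toReal
      (integral_le_toReal_lintegral fun ξ₂ => mul_nonneg (mul_nonneg (h₁0 _) (h₂0 _)) (h₀ _))
  have hchain :
      (∫⁻ ξ₁, ENNReal.ofReal (∫ ξ₂, g₁ ξ₁ * g₂ ξ₂ * g (ξ₁ + ξ₂, Omega2 lam ξ₁ ξ₂))).toReal
        ≤ R₀ :=
    ENNReal.toReal_le_of_le_ofReal hR₀ (le_trans hstep2 hfinal₀)
  refine le_trans (le_trans hstep1 hchain) ?_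
  have hA : ((lam * (2:ℝ)^k₃)⁻¹) ^ ((1:ℝ)/2) = lam ^ (-(1:ℝ)/2) * (2:ℝ)^(-(k₃:ℝ)/2) := by
    have h2pos : (0:ℝ) < (2:ℝ)^k₃ := by positivity
    rw [Real.inv_rpow hbase.le, ← Real.rpow_neg hbase.le, Real.mul_rpow hlam.le h2pos.le]
    congr 1
    · congr 1
      norm_num
    · rw [← Real.rpow_intCast (2:ℝ) k₃, ← Real.rpow_mul (by norm_num : (0:ℝ) ≤ 2)]
      congr 1
      ring
  have hX : (0:ℝ) ≤ lam ^ (-(1:ℝ)/2) * (2:ℝ)^(-(k₃:ℝ)/2) * (n₁ * n₂ * n₃) := by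
    have := Real.rpow_nonneg hlam.le (-(1:ℝ)/2)
    have := Real.rpow_nonneg (by norm_num : (0:ℝ) ≤ 2) (-(k₃:ℝ)/2)
    have h2 : (0:ℝ) ≤ n₁ * n₂ * n₃ :=
      mul_nonneg (mul_nonneg ENNReal.toReal_nonneg ENNReal.toReal_nonneg)
        ENNReal.toReal_nonneg
    positivity
  calc R₀ = lam ^ (-(1:ℝ)/2) * (2:ℝ)^(-(k₃:ℝ)/2) * (n₁ * n₂ * n₃) := by
        rw [hR₀def, hA]
    _ ≤ 16 * (lam ^ (-(1:ℝ)/2) * (2:ℝ)^(-(k₃:ℝ)/2) * (n₁ * n₂ * n₃)) := by linarith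
    _ = 16 * lam ^ (-(1:ℝ)/2) * (2:ℝ) ^ (-(k₃:ℝ)/2) * n₁ * n₂ * n₃ := by ring
end

section
/- For all ξ₁, ξ₂ ∈ ℝ with |ξ₂| ≥ 2 and 0 < λ ≤ 1: if |ξ₂² + 2λξ₁ + λξ₂| < ½ξ₂², then |2λξ₁ - 3ξ₂²| ≥ ½ξ₂². Equivalently, the resonance |Ω₁| = |ξ₂|·|ξ₂² + 2λξ₁ + λξ₂| and the coherence |∂_{ξ₁}Ω₁ - ∂_{ξ₂}Ω₁| = |2λξ₁ - 3ξ₂²| cannot both be small: max(|ξ₂² + 2λξ₁ + λξ₂|, |2λξ₁ - 3ξ₂²|) ≥ ½ξ₂². -/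
theorem resonance_coherence_dichotomy (lam ξ₁ ξ₂ : ℝ) (hlam : 0 < lam)
    (hlam1 : lam ≤ 1) (hξ₂ : 2 ≤ |ξ₂|) :
    (|ξ₂^2 + 2*lam*ξ₁ + lam*ξ₂| < (1/2) * ξ₂^2 → |2*lam*ξ₁ - 3*ξ₂^2| ≥ (1/2) * ξ₂^2) ∧
    max (|ξ₂^2 + 2*lam*ξ₁ + lam*ξ₂|) (|2*lam*ξ₁ - 3*ξ₂^2|) ≥ (1/2) * ξ₂^2 := by
  have habs : ξ₂ ≤ |ξ₂| ∧ -ξ₂ ≤ |ξ₂| := ⟨le_abs_self _, neg_le_abs _⟩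
  have h2 : |ξ₂| ≤ ξ₂^2/2 := by nlinarith [sq_abs ξ₂]
  have key : |ξ₂^2 + 2*lam*ξ₁ + lam*ξ₂| < (1/2) * ξ₂^2 →
      |2*lam*ξ₁ - 3*ξ₂^2| ≥ (1/2) * ξ₂^2 := by
    intro h
    rcases abs_lt.mp h with ⟨h1, h2'⟩
    refine le_abs.mpr (Or.inr ?_)
    nlinarith [habs.1, habs.2]
  refine ⟨key, ?_⟩
  rcases lt_or_ge (|ξ₂^2 + 2*lam*ξ₁ + lam*ξ₂|) ((1/2) * ξ₂^2) with h | h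
  · exact le_max_of_le_right (key h)
  · exact le_max_of_le_left h
end
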